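/- Let f, g ∈ ℂ[x₁,…,xₙ] be polynomials whose highest homogeneous parts f̄ and ḡ (the homogeneous components of f and g of degrees deg f and deg g, respectively) are algebraically independent over ℂ. Then for every polynomial G(x, y) ∈ ℂ[x, y], the total degree of G(f, g) satisfies deg G(f, g) ≥ (deg_y G(x, y)) · deg g, where deg_y denotes the degree of G in the variable y. -/

import Mathlib

/-!
Give the variable `x` weight `deg f` and `y` weight `deg g`, and let `m` be the weighted degree
of `G`. Expanding `G(f, g)` monomial by monomial, every term has total degree at most `m`, and
the degree-`m` part of `G(f, g)` is `P(f̄, ḡ)`, where `P` is the top weighted-homogeneous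
component of `G`. As `P ≠ 0` and `f̄, ḡ` are algebraically independent, `P(f̄, ḡ) ≠ 0`, so
`deg G(f, g) ≥ m ≥ deg_y G · deg g`.
-/

open MvPolynomial

theorem Finsupp.mul_le_weight {ι : Type*} (w : ι → ℕ) (s : ι →₀ ℕ) (i : ι) :
    s i * w i ≤ s.weight w := by
  rcases eq_or_ne (s i) 0 with hi | hi
  · simp [hi]
  rw [Finsupp.weight_apply, Finsupp.sum]
  exact Finset.single_le_sum (f := fun j => s j • w j) (fun _ _ => Nat.zero_le _)
    (Finsupp.mem_support_iff.mpr hi)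

namespace MvPolynomial

variable {σ ι : Type*}

section CommSemiring

variable {R : Type*} [CommSemiring R]

theorem homogeneousComponent_mul_of_totalDegree_le {p q : MvPolynomial σ R} {a b : ℕ}
    (hp : p.totalDegree ≤ a) (hq : q.totalDegree ≤ b) :
    homogeneousComponent (a + b) (p * q) =
      homogeneousComponent a p * homogeneousComponent b q := by
  classical
  ext u
  simp only [coeff_homogeneousComponent, coeff_mul]
  have hp_coeff (v : σ →₀ ℕ) (hv : a < v.degree) : coeff v p = 0 :=
    coeff_eq_zero_of_totalDegree_lt (hp.trans_lt hv)
  have hq_coeff (w : σ →₀ ℕ) (hw : b < w.degree) : coeff w q = 0 :=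
    coeff_eq_zero_of_totalDegree_lt (hq.trans_lt hw)
  split_ifs with hu
  · refine Finset.sum_congr rfl fun ⟨v, w⟩ hvw => ?_
    rw [Finset.HasAntidiagonal.mem_antidiagonal] at hvw
    dsimp only
    have : v.degree + w.degree = a + b := by rw [← hu, ← hvw, map_add]
    split_ifs with hv hw hw
    · rfl
    · simp [hq_coeff w (by omega)]
    · simp [hp_coeff v (by omega)]
    · rcases Nat.lt_or_gt_of_ne hv with hv | hv
      · simp [hq_coeff w (by omega)]
      · simp [hp_coeff v hv]
  · refine (Finset.sum_eq_zero fun ⟨v, w⟩ hvw => ?_).symm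
    rw [Finset.HasAntidiagonal.mem_antidiagonal] at hvw
    dsimp only
    have : v.degree + w.degree ≠ a + b := by rwa [← map_add, hvw]
    split_ifs <;> first | omega | simp

theorem homogeneousComponent_pow_of_totalDegree_le {p : MvPolynomial σ R} {a : ℕ}
    (hp : p.totalDegree ≤ a) (k : ℕ) :
    homogeneousComponent (k * a) (p ^ k) = homogeneousComponent a p ^ k := by
  induction k with
  | zero => simp [homogeneousComponent_zero]
  | succ k ih =>
    rw [add_one_mul, pow_succ, pow_succ, ← ih, homogeneousComponent_mul_of_totalDegree_le
      ((totalDegree_pow p k).trans (Nat.mul_le_mul_left k hp)) hp]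

theorem totalDegree_prod_pow_le (s : Finset ι) {p : ι → MvPolynomial σ R}
    {a : ι → ℕ} (hp : ∀ i ∈ s, (p i).totalDegree ≤ a i) (k : ι → ℕ) :
    (∏ i ∈ s, p i ^ k i).totalDegree ≤ ∑ i ∈ s, k i * a i :=
  (totalDegree_finsetProd _ _).trans (Finset.sum_le_sum fun i hi =>
    (totalDegree_pow _ _).trans (Nat.mul_le_mul_left _ (hp i hi)))

theorem homogeneousComponent_prod_pow_of_totalDegree_le (s : Finset ι)
    {p : ι → MvPolynomial σ R} {a : ι → ℕ} (hp : ∀ i ∈ s, (p i).totalDegree ≤ a i)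
    (k : ι → ℕ) :
    homogeneousComponent (∑ i ∈ s, k i * a i) (∏ i ∈ s, p i ^ k i) =
      ∏ i ∈ s, homogeneousComponent (a i) (p i) ^ k i := by
  classical
  induction s using Finset.induction_on with
  | empty => simp [homogeneousComponent_zero]
  | insert j s hj ih =>
    rw [Finset.forall_mem_insert] at hp
    rw [Finset.sum_insert hj, Finset.prod_insert hj, Finset.prod_insert hj,
      homogeneousComponent_mul_of_totalDegree_le ((totalDegree_pow _ _).trans
        (Nat.mul_le_mul_left _ hp.1)) ?_, homogeneousComponent_pow_of_totalDegree_le hp.1,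
      ih hp.2]
    exact totalDegree_prod_pow_le s hp.2 k

variable {φ : ι → MvPolynomial σ R} {w : ι → ℕ}

theorem homogeneousComponent_aeval_monomial (hφ : ∀ i, (φ i).totalDegree ≤ w i)
    {m : ℕ} {s : ι →₀ ℕ} (hs : s.weight w ≤ m) (c : R) :
    homogeneousComponent m (aeval φ (monomial s c)) =
      aeval (fun i => homogeneousComponent (w i) (φ i))
        (weightedHomogeneousComponent w m (monomial s c)) := by
  have hweight : s.weight w = ∑ i ∈ s.support, s i * w i := by
    simp [Finsupp.weight_apply, Finsupp.sum]
  simp only [aeval_monomial, Finsupp.prod, algebraMap_eq, homogeneousComponent_C_mul]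
  rcases hs.eq_or_lt with hs | hs
  · rw [(isWeightedHomogeneous_monomial w s c hs).weightedHomogeneousComponent_same,
      aeval_monomial, Finsupp.prod, algebraMap_eq, ← hs, hweight,
      homogeneousComponent_prod_pow_of_totalDegree_le _ (fun i _ => hφ i)]
  · rw [(isWeightedHomogeneous_monomial w s c rfl).weightedHomogeneousComponent_ne _ hs.ne',
      map_zero, homogeneousComponent_eq_zero, mul_zero]
    exact (totalDegree_prod_pow_le _ (fun i _ => hφ i) _).trans_lt (hweight ▸ hs)

theorem homogeneousComponent_aeval_of_weightedTotalDegree_le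
    (hφ : ∀ i, (φ i).totalDegree ≤ w i) {m : ℕ} {G : MvPolynomial ι R}
    (hG : G.weightedTotalDegree w ≤ m) :
    homogeneousComponent m (aeval φ G) =
      aeval (fun i => homogeneousComponent (w i) (φ i)) (weightedHomogeneousComponent w m G) := by
  conv_lhs => rw [G.as_sum]
  conv_rhs => rw [G.as_sum]
  simp only [map_sum]
  exact Finset.sum_congr rfl fun s hs => homogeneousComponent_aeval_monomial hφ
    ((le_weightedTotalDegree w hs).trans hG) _

theorem weightedHomogeneousComponent_weightedTotalDegree_ne_zero {G : MvPolynomial ι R}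
    (hG : G ≠ 0) : weightedHomogeneousComponent w (G.weightedTotalDegree w) G ≠ 0 := by
  obtain ⟨s, hs, hsw⟩ := Finset.exists_mem_eq_sup G.support (support_nonempty.mpr hG)
    (Finsupp.weight w)
  refine ne_of_apply_ne (coeff s) ?_
  rw [coeff_weightedHomogeneousComponent, weightedTotalDegree, hsw, if_pos rfl, coeff_zero]
  exact mem_support_iff.mp hs

theorem degreeOf_mul_le_weightedTotalDegree (G : MvPolynomial ι R) (i : ι) :
    G.degreeOf i * w i ≤ G.weightedTotalDegree w := by
  rcases eq_or_ne G 0 with rfl | hG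
  · simp
  obtain ⟨s, hs, hsi⟩ := Finset.exists_mem_eq_sup G.support (support_nonempty.mpr hG) (· i)
  rw [degreeOf_eq_sup, hsi]
  exact (Finsupp.mul_le_weight w s i).trans (le_weightedTotalDegree w hs)

end CommSemiring

theorem weightedTotalDegree_le_totalDegree_aeval {R : Type*} [CommRing R]
    {φ : ι → MvPolynomial σ R}
    (hφ : AlgebraicIndependent R fun i => homogeneousComponent (φ i).totalDegree (φ i))
    (G : MvPolynomial ι R) :
    G.weightedTotalDegree (fun i => (φ i).totalDegree) ≤ (aeval φ G).totalDegree := by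
  rcases eq_or_ne G 0 with rfl | hG
  · simp [weightedTotalDegree_zero]
  by_contra! hlt
  apply (algebraicIndependent_iff_injective_aeval.mp hφ).ne
    (weightedHomogeneousComponent_weightedTotalDegree_ne_zero hG)
  rw [map_zero, ← homogeneousComponent_aeval_of_weightedTotalDegree_le (fun _ => le_rfl) le_rfl,
    homogeneousComponent_eq_zero _ _ hlt]

end MvPolynomial

theorem no_name (n : ℕ) (f g : MvPolynomial (Fin n) ℂ)
    (hind : AlgebraicIndependent ℂ
      ![homogeneousComponent f.totalDegree f, homogeneousComponent g.totalDegree g])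
    (G : MvPolynomial (Fin 2) ℂ) :
    degreeOf 1 G * g.totalDegree ≤ (aeval ![f, g] G).totalDegree := by
  have hleading : AlgebraicIndependent ℂ fun i =>
      homogeneousComponent (![f, g] i).totalDegree (![f, g] i) := by
    convert hind using 1
    ext i : 1
    fin_cases i <;> rfl
  exact (degreeOf_mul_le_weightedTotalDegree G 1).trans
    (weightedTotalDegree_le_totalDegree_aeval hleading G)
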